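/- In the classical Curie–Weiss model (h_i ≡ h), the rate function of the LDP for S_n/n equals I(x) = −(β/2)x² − βhx + I₀(x) − inf_y {−(β/2)y² − βhy + I₀(y)}, where I₀(x) = ((1+x)/2)ln(1+x) + ((1−x)/2)ln(1−x) for |x| ≤ 1 (with value ln 2 at |x| = 1) and I₀(x) = ∞ for |x| > 1. -/

import Mathlib

/-!
After the substitution `z = y + βh`, the Legendre transform of `f(y) = log cosh (y + βh)` is
`f*(x) = −βh x + sup_z (x z − log cosh z)`, and the last supremum is `I₀(x)`: for `|x| < 1` it is
bounded by Jensen's inequality for `log` and attained at `z = artanh x`; for `|x| = 1` it is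
`log 2`, approached as `x z → ∞`; for `|x| > 1` it is infinite since `log cosh z ≤ |z|`.
Substituting `f*` into the definition of `I` gives the claimed formula.
-/

open Real Filter Topology

theorem EReal.coe_add_iSup {ι : Sort*} (a : ℝ) (f : ι → EReal) :
    (a : EReal) + ⨆ i, f i = ⨆ i, ((a : EReal) + f i) := by
  refine Monotone.map_iSup_of_continuousAt (f := ((a : EReal) + ·)) ?_
    (fun _ _ h ↦ add_le_add_right h _) (EReal.add_bot _)
  exact (EReal.continuousAt_add (.inl (EReal.coe_ne_top a)) (.inl (EReal.coe_ne_bot a))).comp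
    (Continuous.prodMk_right _).continuousAt

namespace Real

theorem log_cosh_le_abs (z : ℝ) : log (cosh z) ≤ |z| := by
  rw [log_le_iff_le_exp (cosh_pos z), ← cosh_abs, cosh_eq]
  have : exp (-|z|) ≤ exp |z| := exp_le_exp.2 (by linarith [abs_nonneg z])
  linarith

theorem sub_log_cosh_eq (z : ℝ) : z - log (cosh z) = log 2 - log (1 + exp (-2 * z)) := by
  have hcosh : cosh z = exp z * (1 + exp (-2 * z)) / 2 := by
    rw [cosh_eq, mul_add, mul_one, ← exp_add]; ring_nf
  rw [hcosh, log_div (by positivity) two_ne_zero, log_mul (exp_ne_zero z) (by positivity), log_exp]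
  ring

theorem mul_sub_log_cosh_le {x : ℝ} (hx : |x| < 1) (z : ℝ) :
    x * z - log (cosh z) ≤ (1 + x) / 2 * log (1 + x) + (1 - x) / 2 * log (1 - x) := by
  obtain ⟨hx₁, hx₂⟩ := abs_lt.1 hx
  have hp : 0 < (1 + x) / 2 := by linarith
  have hq : 0 < (1 - x) / 2 := by linarith
  -- Jensen for `log` with weights `(1 ± x) / 2` at the points `exp (± z) / ((1 ± x) / 2)`
  have hjensen := strictConcaveOn_log_Ioi.concaveOn.2 (Set.mem_Ioi.2 (div_pos (exp_pos z) hp))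
    (Set.mem_Ioi.2 (div_pos (exp_pos (-z)) hq)) hp.le hq.le (by ring)
  simp only [smul_eq_mul, mul_div_cancel₀ _ hp.ne', mul_div_cancel₀ _ hq.ne'] at hjensen
  rw [← mul_div_cancel₀ (exp z + exp (-z)) two_ne_zero, ← cosh_eq,
    log_mul two_ne_zero (cosh_pos z).ne', log_div (exp_ne_zero _) hp.ne',
    log_div (exp_ne_zero _) hq.ne', log_exp, log_exp,
    log_div (by linarith) two_ne_zero, log_div (by linarith) two_ne_zero] at hjensen
  linarith

theorem mul_artanh_sub_log_cosh_artanh {x : ℝ} (hx : |x| < 1) :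
    x * artanh x - log (cosh (artanh x)) =
      (1 + x) / 2 * log (1 + x) + (1 - x) / 2 * log (1 - x) := by
  obtain ⟨hx₁, hx₂⟩ := abs_lt.1 hx
  have h1x : 1 - x ^ 2 = (1 + x) * (1 - x) := by ring
  rw [cosh_artanh ⟨hx₁, hx₂⟩, artanh_eq_half_log ⟨hx₁.le, hx₂.le⟩, one_div √(1 - x ^ 2), log_inv,
    log_sqrt (by nlinarith), h1x, log_mul (by linarith) (by linarith),
    log_div (by linarith) (by linarith)]
  ring

end Real

theorem iSup_mul_sub_log_cosh_of_abs_lt {x : ℝ} (hx : |x| < 1) :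
    ⨆ z : ℝ, ((x * z - log (cosh z) : ℝ) : EReal) =
      (((1 + x) / 2 * log (1 + x) + (1 - x) / 2 * log (1 - x) : ℝ) : EReal) :=
  le_antisymm (iSup_le fun z ↦ EReal.coe_le_coe (mul_sub_log_cosh_le hx z))
    (le_iSup_of_le (artanh x) (EReal.coe_le_coe (mul_artanh_sub_log_cosh_artanh hx).ge))

theorem iSup_sub_log_cosh : ⨆ z : ℝ, ((z - log (cosh z) : ℝ) : EReal) = ((log 2 : ℝ) : EReal) := by
  refine iSup_eq_of_forall_le_of_tendsto (F := atTop) (fun z ↦ ?_) ?_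
  · rw [sub_log_cosh_eq, EReal.coe_le_coe_iff, sub_le_self_iff]
    exact log_nonneg (by linarith [exp_pos (-2 * z)])
  · simp_rw [sub_log_cosh_eq]
    refine EReal.tendsto_coe.2 ?_
    have hexp : Tendsto (fun z : ℝ ↦ exp (-2 * z)) atTop (𝓝 0) :=
      tendsto_exp_atBot.comp (tendsto_id.const_mul_atTop_of_neg (by norm_num))
    simpa using ((hexp.const_add 1).log (by norm_num)).const_sub (log 2)

theorem iSup_mul_sub_log_cosh_of_abs_eq_one {x : ℝ} (hx : |x| = 1) :
    ⨆ z : ℝ, ((x * z - log (cosh z) : ℝ) : EReal) = ((log 2 : ℝ) : EReal) := by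
  have hx₀ : x ≠ 0 := by rintro rfl; simp at hx
  have heven (z : ℝ) : x * z - log (cosh z) = x * z - log (cosh (x * z)) := by
    rw [← cosh_abs (x * z), abs_mul, hx, one_mul, cosh_abs]
  simp_rw [heven]
  exact ((Equiv.mulLeft₀ x hx₀).iSup_comp (g := fun w ↦ ((w - log (cosh w) : ℝ) : EReal))).trans
    iSup_sub_log_cosh

theorem iSup_mul_sub_log_cosh_of_one_lt_abs {x : ℝ} (hx : 1 < |x|) :
    ⨆ z : ℝ, ((x * z - log (cosh z) : ℝ) : EReal) = ⊤ := by
  refine iSup_eq_of_forall_le_of_tendsto (F := map (· * x) atTop) (fun _ ↦ le_top) ?_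
  rw [tendsto_map'_iff, Function.comp_def, EReal.tendsto_coe_nhds_top_iff]
  refine tendsto_atTop_mono' _ ?_ (tendsto_id.atTop_mul_const (by nlinarith : 0 < |x| * (|x| - 1)))
  filter_upwards [eventually_ge_atTop 0] with t ht
  have := log_cosh_le_abs (t * x)
  rw [abs_mul, abs_of_nonneg ht] at this
  rw [id]
  nlinarith [sq_abs x]

theorem iSup_mul_sub_log_cosh (x : ℝ) :
    ⨆ z : ℝ, ((x * z - log (cosh z) : ℝ) : EReal) =
      if |x| < 1 then
        (((1 + x) / 2 * log (1 + x) + (1 - x) / 2 * log (1 - x) : ℝ) : EReal)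
      else if |x| = 1 then ((log 2 : ℝ) : EReal) else ⊤ := by
  split_ifs with hlt heq
  · exact iSup_mul_sub_log_cosh_of_abs_lt hlt
  · exact iSup_mul_sub_log_cosh_of_abs_eq_one heq
  · exact iSup_mul_sub_log_cosh_of_one_lt_abs (lt_of_le_of_ne (not_lt.1 hlt) (Ne.symm heq))

theorem iSup_mul_sub_log_cosh_add (c x : ℝ) :
    ⨆ y : ℝ, ((x * y - log (cosh (y + c)) : ℝ) : EReal) =
      ((-(c * x) : ℝ) : EReal) + ⨆ z : ℝ, ((x * z - log (cosh z) : ℝ) : EReal) := by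
  rw [EReal.coe_add_iSup, ← (Equiv.subRight c).iSup_comp]
  refine iSup_congr fun z ↦ ?_
  rw [Equiv.subRight_apply, sub_add_cancel, ← EReal.coe_add]
  ring_nf

theorem stmt_12_general (β h : ℝ)
    -- the Legendre–Fenchel transform of f(y) = ln cosh(y + βh)
    (fstar : ℝ → EReal)
    (hfstar : ∀ x, fstar x = ⨆ y : ℝ, ((x * y - Real.log (Real.cosh (y + β * h)) : ℝ) : EReal))
    -- I₀, the entropy function
    (I₀ : ℝ → EReal)
    (hI₀ : ∀ x, I₀ x =
      if |x| < 1 then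
        (((1 + x) / 2 * Real.log (1 + x) + (1 - x) / 2 * Real.log (1 - x) : ℝ) : EReal)
      else if |x| = 1 then ((Real.log 2 : ℝ) : EReal) else ⊤)
    -- the rate function of the LDP: I(x) = f*(x) − βx²/2 − inf_y {f*(y) − βy²/2}
    (I : ℝ → EReal)
    (hI : ∀ x, I x = fstar x - ((β * x ^ 2 / 2 : ℝ) : EReal)
      - ⨅ y : ℝ, (fstar y - ((β * y ^ 2 / 2 : ℝ) : EReal))) :
    ∀ x : ℝ, I x = ((-(β / 2) * x ^ 2 - β * h * x : ℝ) : EReal) + I₀ x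
      - ⨅ y : ℝ, (((-(β / 2) * y ^ 2 - β * h * y : ℝ) : EReal) + I₀ y) := by
  have hfstar_sub (u : ℝ) : fstar u - ((β * u ^ 2 / 2 : ℝ) : EReal) =
      ((-(β / 2) * u ^ 2 - β * h * u : ℝ) : EReal) + I₀ u := by
    rw [hfstar, iSup_mul_sub_log_cosh_add, iSup_mul_sub_log_cosh, ← hI₀, sub_eq_add_neg,
      ← EReal.coe_neg, add_right_comm, ← EReal.coe_add]
    ring_nf
  intro x
  rw [hI, hfstar_sub, iInf_congr hfstar_sub]

theorem stmt_12 (β h : ℝ) (hβ : 0 < β)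
    -- the Legendre–Fenchel transform of f(y) = ln cosh(y + βh)
    (fstar : ℝ → EReal)
    (hfstar : ∀ x, fstar x = ⨆ y : ℝ, ((x * y - Real.log (Real.cosh (y + β * h)) : ℝ) : EReal))
    -- I₀, the entropy function
    (I₀ : ℝ → EReal)
    (hI₀ : ∀ x, I₀ x =
      if |x| < 1 then
        (((1 + x) / 2 * Real.log (1 + x) + (1 - x) / 2 * Real.log (1 - x) : ℝ) : EReal)
      else if |x| = 1 then ((Real.log 2 : ℝ) : EReal) else ⊤)
    -- the rate function of the LDP: I(x) = f*(x) − βx²/2 − inf_y {f*(y) − βy²/2}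
    (I : ℝ → EReal)
    (hI : ∀ x, I x = fstar x - ((β * x ^ 2 / 2 : ℝ) : EReal)
      - ⨅ y : ℝ, (fstar y - ((β * y ^ 2 / 2 : ℝ) : EReal))) :
    ∀ x : ℝ, I x = ((-(β / 2) * x ^ 2 - β * h * x : ℝ) : EReal) + I₀ x
      - ⨅ y : ℝ, (((-(β / 2) * y ^ 2 - β * h * y : ℝ) : EReal) + I₀ y) :=
  stmt_12_general β h fstar hfstar I₀ hI₀ I hI
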